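/- Preferential propositional logic with team semantics satisfies System C and violates System P: (1) for every preferential model W for TPL, the entailment ⊢_W restricted to PL-formulas satisfies (Ref), (LLE), (RW), (Cut) and (CM); and (2) there exists a preferential model W for TPL and PL-formulas φ, ψ, γ with φ ⊢_W γ and ψ ⊢_W γ but not φ∨ψ ⊢_W γ, so (Or) fails. -/
import Mathlib


/-- PL-formulas in negation normal form over variables `V`. -/
inductive PL (V : Type) : Type
  | pos : V → PL V
  | neg : V → PL V
  | bot : PL V
  | top : PL V
  | conj : PL V → PL V → PL V
  | disj : PL V → PL V → PL V

/-- Team semantics of PL-formulas. -/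
def PL.tsat {V : Type} : PL V → Set (V → Bool) → Prop
  | .pos p, X => ∀ v ∈ X, v p = true
  | .neg p, X => ∀ v ∈ X, v p = false
  | .bot, X => X = ∅
  | .top, _ => True
  | .conj φ ψ, X => PL.tsat φ X ∧ PL.tsat ψ X
  | .disj φ ψ, X => ∃ Y Z : Set (V → Bool), X = Y ∪ Z ∧ PL.tsat φ Y ∧ PL.tsat ψ Z

/-- A preferential model for TPL over the variables `V`: a set of states `S`,
a labelling of states by teams, and a strict partial order on states that is
smooth with respect to every PL-formula. -/
structure TPrefModel (V : Type) where
  S : Type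
  label : S → Set (V → Bool)
  lt : S → S → Prop
  irrefl : ∀ s, ¬ lt s s
  trans : ∀ {s t u}, lt s t → lt t u → lt s u
  smooth : ∀ (φ : PL V) (s : S), PL.tsat φ (label s) →
    (∀ s', PL.tsat φ (label s') → ¬ lt s' s) ∨
      ∃ s', PL.tsat φ (label s') ∧ (∀ s'', PL.tsat φ (label s'') → ¬ lt s'' s') ∧ lt s' s

/-- `s` is a `≺`-minimal state among those whose label satisfies `φ`. -/
def TPrefModel.minimal {V : Type} (W : TPrefModel V) (φ : PL V) (s : W.S) : Prop :=
  PL.tsat φ (W.label s) ∧ ∀ s', PL.tsat φ (W.label s') → ¬ W.lt s' s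

/-- Preferential entailment `φ ⊢_W ψ`. -/
def TPrefModel.ent {V : Type} (W : TPrefModel V) (φ ψ : PL V) : Prop :=
  ∀ s, W.minimal φ s → PL.tsat ψ (W.label s)

/-- The two propositional variables `p` and `q`. -/
inductive Var2 : Type
  | p : Var2
  | q : Var2
deriving DecidableEq

instance : Fintype Var2 := ⟨⟨{Var2.p, Var2.q}, by decide⟩, by intro x; cases x <;> decide⟩

/-! Auxiliary definitions for the counterexample model: -/

inductive St4 : Type
  | e | a | b | c
deriving DecidableEq

def ve : Var2 → Bool := fun _ => true
def va : Var2 → Bool := fun x => match x with | .p => true | .q => false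
def vb : Var2 → Bool := fun x => match x with | .p => false | .q => true

def lab4 : St4 → Set (Var2 → Bool)
  | .e => {ve}
  | .a => {va}
  | .b => {vb}
  | .c => {va, vb}

def lt4 : St4 → St4 → Prop := fun s t => s = St4.e ∧ (t = St4.a ∨ t = St4.b)

def Wc : TPrefModel Var2 where
  S := St4
  label := lab4
  lt := lt4
  irrefl := by intro s ⟨h1, h2⟩; subst h1; rcases h2 with h | h <;> cases h
  trans := by
    intro s t u ⟨h1, h2⟩ ⟨h3, h4⟩
    subst h1; subst h3
    rcases h2 with h | h <;> cases h
  smooth := by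
    intro φ s hs
    by_cases hmin : ∀ s', PL.tsat φ (lab4 s') → ¬ lt4 s' s
    · exact Or.inl hmin
    · push_neg at hmin
      obtain ⟨s', hs', hlt⟩ := hmin
      have he : s' = St4.e := hlt.1
      subst he
      refine Or.inr ⟨St4.e, hs', ?_, hlt⟩
      intro s'' _ ⟨_, h2⟩
      rcases h2 with h | h <;> cases h


/-- Preferential propositional team logic satisfies System C and violates
System P: (1) every preferential model for TPL satisfies (Ref), (LLE), (RW),
(Cut) and (CM); (2) there is a preferential model for TPL and PL-formulas
witnessing the failure of (Or). -/
theorem TPL_SystemC_and_violates_SystemP :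
    (∀ (V : Type) [Fintype V] [Nonempty V] (W : TPrefModel V),
      (∀ φ : PL V, W.ent φ φ) ∧
      (∀ φ ψ γ : PL V,
        {X : Set (V → Bool) | PL.tsat φ X} = {X : Set (V → Bool) | PL.tsat ψ X} →
        W.ent φ γ → W.ent ψ γ) ∧
      (∀ φ ψ γ : PL V,
        {X : Set (V → Bool) | PL.tsat φ X} ⊆ {X : Set (V → Bool) | PL.tsat ψ X} →
        W.ent γ φ → W.ent γ ψ) ∧
      (∀ φ ψ γ : PL V, W.ent (.conj φ ψ) γ → W.ent φ ψ → W.ent φ γ) ∧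
      (∀ φ ψ γ : PL V, W.ent φ ψ → W.ent φ γ → W.ent (.conj φ ψ) γ)) ∧
    (∃ (W : TPrefModel Var2) (φ ψ γ : PL Var2),
      W.ent φ γ ∧ W.ent ψ γ ∧ ¬ W.ent (.disj φ ψ) γ) := by
  constructor
  · intro V _ _ W
    refine ⟨?_, ?_, ?_, ?_, ?_⟩
    · intro φ s hs; exact hs.1
    · intro φ ψ γ h hent s hs
      have hiff : ∀ X : Set (V → Bool), PL.tsat φ X ↔ PL.tsat ψ X := by
        intro X; exact Set.ext_iff.mp h X
      exact hent s ⟨(hiff _).mpr hs.1, fun s' hs' => hs.2 s' ((hiff _).mp hs')⟩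
    · intro φ ψ γ h hent s hs
      exact h (hent s hs)
    · intro φ ψ γ h1 h2 s hs
      exact h1 s ⟨⟨hs.1, h2 s hs⟩, fun s' hs' => hs.2 s' hs'.1⟩
    · intro φ ψ γ h1 h2 s hs
      have hφ : PL.tsat φ (W.label s) := hs.1.1
      rcases W.smooth φ s hφ with hmin | ⟨s', hs'1, hs'2, hlt⟩
      · exact h2 s ⟨hφ, hmin⟩
      · exact absurd hlt (hs.2 s' ⟨hs'1, h1 s' ⟨hs'1, hs'2⟩⟩)
  · refine ⟨Wc, .pos Var2.p, .pos Var2.q, .conj (.pos Var2.p) (.pos Var2.q), ?_, ?_, ?_⟩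
    · intro s hs
      obtain ⟨h1, h2⟩ := hs
      cases s with
      | e =>
        constructor <;>
          · intro v hv
            have hve : v = ve := hv
            subst hve; rfl
      | a =>
        exfalso
        refine h2 St4.e ?_ ⟨rfl, Or.inl rfl⟩
        intro v hv
        have hve : v = ve := hv
        subst hve; rfl
      | b =>
        exfalso
        have hb : vb Var2.p = true := h1 vb rfl
        simp [vb] at hb
      | c =>
        exfalso
        have hb : vb Var2.p = true := h1 vb (Set.mem_insert_iff.mpr (Or.inr rfl))
        simp [vb] at hb
    · intro s hs
      obtain ⟨h1, h2⟩ := hs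
      cases s with
      | e =>
        constructor <;>
          · intro v hv
            have hve : v = ve := hv
            subst hve; rfl
      | b =>
        exfalso
        refine h2 St4.e ?_ ⟨rfl, Or.inr rfl⟩
        intro v hv
        have hve : v = ve := hv
        subst hve; rfl
      | a =>
        exfalso
        have ha : va Var2.q = true := h1 va rfl
        simp [va] at ha
      | c =>
        exfalso
        have ha : va Var2.q = true := h1 va (Set.mem_insert _ _)
        simp [va] at ha
    · intro hent
      have hc : Wc.minimal (.disj (.pos Var2.p) (.pos Var2.q)) St4.c := by
        refine ⟨⟨{va}, {vb}, Set.insert_eq va {vb}, ?_, ?_⟩, ?_⟩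
        · intro v hv
          have hva : v = va := hv
          subst hva; rfl
        · intro v hv
          have hvb : v = vb := hv
          subst hvb; rfl
        · rintro s' _ ⟨_, h2⟩
          rcases h2 with h | h <;> cases h
      have hq : vb Var2.p = true :=
        (hent St4.c hc).1 vb (Set.mem_insert_iff.mpr (Or.inr rfl))
      simp [vb] at hq
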